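/- Let f : ℝ → ℝ be a nonnegative measurable function with ∫_ℝ f(x) dx = 1, let F(x) = ∫_{-∞}^{x} f(t) dt, assume F(x) ∈ (0,1) for all x in the set {f > 0} up to a null set (i.e. the distribution is continuous with no atoms), and let λ > 0. Let g₁(x) = λ f(x)(F(x))^{λ-1} be the density of the first Lehmann alternative. Then the Kullback–Leibler divergence of g₁ from f satisfies D_KL(g₁ | f) = ∫_ℝ g₁(x) ln(g₁(x)/f(x)) dx = ∫_ℝ λ f(x)(F(x))^{λ-1} ln(λ (F(x))^{λ-1}) dx = ln λ + (1 - λ)/λ. -/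
import Mathlib

open MeasureTheory

open Set Filter Topology Real in
/-- The CDF of an integrable density is continuous. -/
private lemma lehmann_F_continuous (f : ℝ → ℝ) (hf_int : Integrable f)
    (F : ℝ → ℝ) (hF : ∀ x, F x = ∫ t in Set.Iic x, f t) : Continuous F := by
  have key : ∀ x, F x = (∫ t in (0:ℝ)..x, f t) + F 0 := by
    intro x
    rw [hF x, hF 0, ← intervalIntegral.integral_Iic_sub_Iic hf_int.integrableOn
      hf_int.integrableOn]
    ring
  have : Continuous fun x => (∫ t in (0:ℝ)..x, f t) + F 0 :=
    (intervalIntegral.continuous_primitive (fun _ _ => hf_int.intervalIntegrable) 0).add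
      continuous_const
  exact this.congr fun x => (key x).symm

open Set Filter Topology Real in
/-- Probability integral transform: the pushforward of the density measure under
the continuous CDF is the uniform distribution on `(0, 1]`. -/
private lemma lehmann_map_eq (f : ℝ → ℝ) (hf_meas : Measurable f)
    (hf_nonneg : ∀ x, 0 ≤ f x) (hf_int : Integrable f) (hf_one : ∫ x, f x = 1)
    (F : ℝ → ℝ) (hF : ∀ x, F x = ∫ t in Set.Iic x, f t)
    (hF_cont : ∀ᵐ x, 0 < f x → F x ∈ Set.Ioo (0 : ℝ) 1) :
    (volume.withDensity fun x => ENNReal.ofReal (f x)).map F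
      = volume.restrict (Set.Ioc 0 1) := by
  have hFc : Continuous F := lehmann_F_continuous f hf_int F hF
  have hFmono : Monotone F := by
    intro a b hab
    rw [hF a, hF b]
    exact setIntegral_mono_set hf_int.integrableOn
      (ae_restrict_of_ae (ae_of_all _ hf_nonneg))
      ((Iic_subset_Iic.2 hab).eventuallyLE)
  have hF0 : ∀ x, 0 ≤ F x := fun x => by
    rw [hF x]; exact setIntegral_nonneg measurableSet_Iic fun t _ => hf_nonneg t
  have hF1 : ∀ x, F x ≤ 1 := fun x => by
    rw [hF x, ← hf_one]; exact setIntegral_le_integral hf_int (ae_of_all _ hf_nonneg)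
  have htop : Tendsto F atTop (𝓝 1) := by
    have := (aecover_Iic (tendsto_id (α := ℝ))).integral_tendsto_of_countably_generated hf_int
    rw [hf_one] at this
    exact this.congr fun x => (hF x).symm
  have hbot : Tendsto F atBot (𝓝 0) := by
    have h1 : Tendsto (fun y => ∫ x in Ioi y, f x) atBot (𝓝 (∫ x, f x)) :=
      (aecover_Ioi (tendsto_id (α := ℝ))).integral_tendsto_of_countably_generated hf_int
    have h2 : ∀ y, F y = (∫ x, f x) - ∫ x in Ioi y, f x := by
      intro y
      rw [hF y, ← integral_add_compl measurableSet_Iic hf_int, compl_Iic]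
      ring
    have h3 : Tendsto (fun y => (∫ x, f x) - ∫ x in Ioi y, f x) atBot
        (𝓝 ((∫ x, f x) - ∫ x, f x)) := tendsto_const_nhds.sub h1
    rw [sub_self] at h3
    exact h3.congr fun y => (h2 y).symm
  set μ : Measure ℝ := volume.withDensity fun x => ENNReal.ofReal (f x) with hμ
  have hprob : IsProbabilityMeasure μ := by
    constructor
    rw [hμ, withDensity_apply _ MeasurableSet.univ, setLIntegral_univ,
      ← ofReal_integral_eq_lintegral_ofReal hf_int (ae_of_all _ hf_nonneg), hf_one,
      ENNReal.ofReal_one]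
  have hμIic : ∀ x, μ (Iic x) = ENNReal.ofReal (F x) := by
    intro x
    rw [hμ, withDensity_apply _ measurableSet_Iic,
      ← ofReal_integral_eq_lintegral_ofReal hf_int.integrableOn
        (ae_restrict_of_ae (ae_of_all _ hf_nonneg)), hF x]
  refine Measure.ext_of_Iic _ _ fun u => ?_
  rw [Measure.map_apply hFc.measurable measurableSet_Iic,
    Measure.restrict_apply measurableSet_Iic]
  rcases lt_or_ge u 0 with hu | hu
  · have h1 : F ⁻¹' Iic u = ∅ := by
      ext x; simp only [mem_preimage, mem_Iic, mem_empty_iff_false, iff_false, not_le]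
      exact lt_of_lt_of_le hu (hF0 x)
    have h2 : Iic u ∩ Ioc (0:ℝ) 1 = ∅ := by
      ext x; simp only [mem_inter_iff, mem_Iic, mem_Ioc, mem_empty_iff_false, iff_false]
      rintro ⟨h, h0, -⟩; linarith
    rw [h1, h2, measure_empty, measure_empty]
  rcases lt_or_ge u 1 with hu1 | hu1
  · -- 0 ≤ u < 1
    have hIioc : Iic u ∩ Ioc (0:ℝ) 1 = Ioc 0 u := by
      ext x
      simp only [mem_inter_iff, mem_Iic, mem_Ioc]
      constructor
      · rintro ⟨h, h0, -⟩; exact ⟨h0, h⟩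
      · rintro ⟨h0, h⟩; exact ⟨h, h0, h.trans hu1.le⟩
    rw [hIioc, Real.volume_Ioc, sub_zero]
    rcases eq_or_lt_of_le hu with hu0 | hu0
    · -- u = 0
      rw [← hu0, ENNReal.ofReal_zero]
      have hs : MeasurableSet (F ⁻¹' Iic (0:ℝ)) := hFc.measurable measurableSet_Iic
      rw [hμ, withDensity_apply _ hs]
      have hz : ∀ᵐ x ∂(volume.restrict (F ⁻¹' Iic (0:ℝ))),
          ENNReal.ofReal (f x) = 0 := by
        refine (ae_restrict_iff' hs).2 ((hF_cont.mono fun x hx hmem => ?_))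
        by_contra hne
        have hfx : 0 < f x := by
          rcases lt_or_eq_of_le (hf_nonneg x) with h | h
          · exact h
          · exact absurd (by rw [← h, ENNReal.ofReal_zero]) hne
        exact (not_le.2 (hx hfx).1) hmem
      rw [lintegral_congr_ae hz, lintegral_zero]
    · -- 0 < u < 1
      obtain ⟨a, ha⟩ : ∃ a, F a < u := (hbot.eventually_lt_const hu0).exists
      obtain ⟨b, hb⟩ : ∃ b, u < F b := (htop.eventually_const_lt hu1).exists
      have hne : {x | F x ≤ u}.Nonempty := ⟨a, ha.le⟩
      have hbdd : BddAbove {x | F x ≤ u} := by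
        refine ⟨b, fun x hx => ?_⟩
        by_contra hxb
        push_neg at hxb
        exact absurd (hFmono hxb.le) (not_le.2 (lt_of_le_of_lt hx hb))
      set x0 := sSup {x | F x ≤ u} with hx0
      have hclosed : IsClosed {x | F x ≤ u} := isClosed_le hFc continuous_const
      have hx0mem : F x0 ≤ u := hclosed.csSup_mem hne hbdd
      have hx0eq : F x0 = u := by
        refine le_antisymm hx0mem ?_
        by_contra hlt
        push_neg at hlt
        have hev : ∀ᶠ x in 𝓝 x0, F x < u := (hFc.tendsto x0).eventually_lt_const hlt
        obtain ⟨x, hxF, hxgt⟩ := ((hev.filter_mono nhdsWithin_le_nhds).and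
          (self_mem_nhdsWithin (s := Ioi x0) : _)).exists
        exact absurd (le_csSup hbdd hxF.le) (not_le.2 hxgt)
      have hset : F ⁻¹' Iic u = Iic x0 := by
        ext x
        simp only [mem_preimage, mem_Iic]
        exact ⟨fun hx => le_csSup hbdd hx, fun hx => (hFmono hx).trans hx0mem⟩
      rw [hset, hμIic, hx0eq]
  · -- 1 ≤ u
    have h1 : F ⁻¹' Iic u = univ := by
      ext x; simp only [mem_preimage, mem_Iic, mem_univ, iff_true]
      exact (hF1 x).trans hu1
    have h2 : Iic u ∩ Ioc (0:ℝ) 1 = Ioc 0 1 := by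
      ext x
      simp only [mem_inter_iff, mem_Iic, mem_Ioc, and_iff_right_iff_imp]
      rintro ⟨-, hx1⟩; exact hx1.trans hu1
    rw [h1, h2, Real.volume_Ioc]
    simp [hprob.measure_univ]

open Set Filter Topology Real in
private lemma lehmann_interval_integral (l : ℝ) (hl : 0 < l) :
    ∫ u in Set.Ioc (0:ℝ) 1, l * u ^ (l - 1) * Real.log (l * u ^ (l - 1))
      = Real.log l + (1 - l) / l := by
  have hl0 : l ≠ 0 := hl.ne'
  -- pointwise identity on Ioc 0 1
  have hpt : ∀ u ∈ Ioc (0:ℝ) 1,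
      l * u ^ (l-1) * Real.log (l * u ^ (l-1))
        = l * Real.log l * u ^ (l-1) + (l * (l-1)) * (u ^ (l-1) * Real.log u) := by
    intro u hu
    rw [Real.log_mul hl0 (Real.rpow_pos_of_pos hu.1 _).ne', Real.log_rpow hu.1]
    ring
  -- integrability of u ^ (l-1) * log u on Ioc 0 1
  have hint_log : IntegrableOn (fun u : ℝ => u ^ (l-1) * Real.log u) (Ioc 0 1) volume := by
    have hg : IntegrableOn (fun u : ℝ => 2 / l * u ^ (l/2 - 1)) (Ioc 0 1) volume := by
      have h := (intervalIntegral.intervalIntegrable_rpow' (a := 0) (b := 1)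
        (r := l/2 - 1) (by linarith)).const_mul (2/l)
      rwa [intervalIntegrable_iff_integrableOn_Ioc_of_le zero_le_one] at h
    refine Integrable.mono' hg ?_ ?_
    · exact (by measurability : Measurable fun u : ℝ => u ^ (l-1) * Real.log u).aestronglyMeasurable
    · refine (ae_restrict_iff' measurableSet_Ioc).2 (ae_of_all _ fun u hu => ?_)
      have hu0 : 0 < u := hu.1
      have hlog : Real.log u ≤ 0 := Real.log_nonpos hu0.le hu.2
      have habs : ‖u ^ (l-1) * Real.log u‖ = u ^ (l-1) * (-Real.log u) := by
        rw [norm_mul, Real.norm_eq_abs, Real.norm_eq_abs,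
          abs_of_nonneg (Real.rpow_nonneg hu0.le _), abs_of_nonpos hlog]
      rw [habs]
      have hb : -Real.log u ≤ 2 / l * u ^ (-(l/2)) := by
        have h1 := Real.log_le_rpow_div (x := u⁻¹) (by positivity) (by positivity : (0:ℝ) < l/2)
        rw [Real.log_inv] at h1
        have h2 : (u⁻¹) ^ (l/2) / (l/2) = 2 / l * u ^ (-(l/2)) := by
          rw [Real.inv_rpow hu0.le, ← Real.rpow_neg hu0.le]
          field_simp
        linarith [h1, h2.le, h2.ge]
      calc u ^ (l-1) * (-Real.log u) ≤ u ^ (l-1) * (2 / l * u ^ (-(l/2))) :=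
            mul_le_mul_of_nonneg_left hb (Real.rpow_nonneg hu0.le _)
        _ = 2 / l * u ^ (l/2 - 1) := by
            rw [show l/2 - 1 = (l-1) + -(l/2) by ring, Real.rpow_add hu0]
            ring
  have hint_pow : IntegrableOn (fun u : ℝ => l * Real.log l * u ^ (l-1)) (Ioc 0 1) volume := by
    have h := (intervalIntegral.intervalIntegrable_rpow' (a := 0) (b := 1)
      (r := l - 1) (by linarith)).const_mul (l * Real.log l)
    rwa [intervalIntegrable_iff_integrableOn_Ioc_of_le zero_le_one] at h
  have hint : IntervalIntegrable
      (fun u : ℝ => l * u ^ (l-1) * Real.log (l * u ^ (l-1))) volume 0 1 := by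
    rw [intervalIntegrable_iff_integrableOn_Ioc_of_le zero_le_one]
    have hsum : IntegrableOn (fun u : ℝ => l * Real.log l * u ^ (l-1)
        + (l * (l-1)) * (u ^ (l-1) * Real.log u)) (Ioc 0 1) volume :=
      hint_pow.add (hint_log.const_mul (l * (l-1)))
    exact hsum.congr_fun (fun u hu => (hpt u hu).symm) measurableSet_Ioc
  -- the antiderivative
  set H : ℝ → ℝ := fun u => u ^ l * Real.log l + (l-1) * (u ^ l * Real.log u)
      - (l-1) * u ^ l / l with hH
  have hc1 : Continuous fun u : ℝ => u ^ l :=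
    continuous_id.rpow_const fun _ => Or.inr hl.le
  have hc2 : ContinuousOn (fun u : ℝ => u ^ l * Real.log u) (Icc 0 1) := by
    intro u hu
    rcases eq_or_lt_of_le hu.1 with h0 | h0
    · have hsub : Icc (0:ℝ) 1 ⊆ insert 0 (Ioi 0) := by
        intro x hx
        rcases eq_or_lt_of_le hx.1 with h | h
        · exact Or.inl h.symm
        · exact Or.inr h
      rw [← h0]
      refine ContinuousWithinAt.mono ?_ hsub
      rw [continuousWithinAt_insert_self]
      unfold ContinuousWithinAt
      have h := tendsto_log_mul_rpow_nhdsGT_zero hl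
      simp only [Real.zero_rpow hl0, Real.log_zero, zero_mul, mul_zero]
      exact h.congr fun x => mul_comm _ _
    · exact ((Real.continuousAt_rpow_const u l (Or.inl h0.ne')).mul
        (Real.continuousAt_log h0.ne')).continuousWithinAt
  have hHcont : ContinuousOn H (Icc 0 1) := by
    rw [hH]
    exact ((hc1.continuousOn.mul continuousOn_const).add
      (continuousOn_const.mul hc2)).sub
      ((continuousOn_const.mul hc1.continuousOn).div_const l)
  have hderiv : ∀ u ∈ Ioo (0:ℝ) 1,
      HasDerivAt H (l * u ^ (l-1) * Real.log (l * u ^ (l-1))) u := by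
    intro u hu
    have hu0 : 0 < u := hu.1
    have h1 : HasDerivAt (fun u : ℝ => u ^ l) (l * u ^ (l-1)) u :=
      Real.hasDerivAt_rpow_const (Or.inl hu0.ne')
    have h2 : HasDerivAt (fun u : ℝ => u ^ l * Real.log u)
        (l * u ^ (l-1) * Real.log u + u ^ l * u⁻¹) u :=
      h1.mul (Real.hasDerivAt_log hu0.ne')
    have h3 : HasDerivAt H
        (l * u ^ (l-1) * Real.log l + (l-1) * (l * u ^ (l-1) * Real.log u + u ^ l * u⁻¹)
          - (l-1) * (l * u ^ (l-1)) / l) u :=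
      ((h1.mul_const (Real.log l)).add (h2.const_mul (l-1))).sub
        ((h1.const_mul (l-1)).div_const l)
    convert h3 using 1
    rw [Real.log_mul hl0 (Real.rpow_pos_of_pos hu0 _).ne', Real.log_rpow hu0]
    have hinv : u ^ l * u⁻¹ = u ^ (l-1) := by
      rw [show l - 1 = l + (-1) by ring, Real.rpow_add hu0, Real.rpow_neg_one]
    rw [hinv]
    field_simp
    ring
  rw [← intervalIntegral.integral_of_le zero_le_one,
    intervalIntegral.integral_eq_sub_of_hasDerivAt_of_le zero_le_one hHcont hderiv hint]
  rw [hH]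
  simp only [Real.one_rpow, Real.log_one, Real.zero_rpow hl0, Real.log_zero]
  field_simp
  ring

/-- The Kullback–Leibler divergence of the first Lehmann extension density
`g₁ x = λ f(x) F(x)^(λ-1)` from the original density `f` equals
`ln λ + (1 - λ)/λ`. -/
theorem kl_divergence_lehmann_first (f : ℝ → ℝ) (hf_meas : Measurable f)
    (hf_nonneg : ∀ x, 0 ≤ f x) (hf_int : Integrable f)
    (hf_one : ∫ x, f x = 1)
    (F : ℝ → ℝ) (hF : ∀ x, F x = ∫ t in Set.Iic x, f t)
    (hF_cont : ∀ᵐ x, 0 < f x → F x ∈ Set.Ioo (0 : ℝ) 1)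
    (l : ℝ) (hl : 0 < l)
    (g₁ : ℝ → ℝ) (hg₁ : ∀ x, g₁ x = l * f x * (F x) ^ (l - 1)) :
    (∫ x, g₁ x * Real.log (g₁ x / f x) =
      ∫ x, l * f x * (F x) ^ (l - 1) * Real.log (l * (F x) ^ (l - 1))) ∧
    ∫ x, g₁ x * Real.log (g₁ x / f x) = Real.log l + (1 - l) / l := by
  have hpt : (fun x => g₁ x * Real.log (g₁ x / f x))
      = fun x => l * f x * (F x) ^ (l - 1) * Real.log (l * (F x) ^ (l - 1)) := by
    funext x
    rcases eq_or_lt_of_le (hf_nonneg x) with h0 | h0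
    · rw [hg₁ x, ← h0]; ring
    · rw [hg₁ x]
      congr 2
      field_simp
  have hfirst : ∫ x, g₁ x * Real.log (g₁ x / f x)
      = ∫ x, l * f x * (F x) ^ (l - 1) * Real.log (l * (F x) ^ (l - 1)) := by
    rw [hpt]
  refine ⟨hfirst, ?_⟩
  rw [hfirst]
  -- transform via the pushforward measure
  set φ : ℝ → ℝ := fun u => l * u ^ (l - 1) * Real.log (l * u ^ (l - 1)) with hφ
  have hφmeas : Measurable φ := by
    rw [hφ]; measurability
  have hFc : Continuous F := lehmann_F_continuous f hf_int F hF
  have hptw : (fun x => l * f x * (F x) ^ (l - 1) * Real.log (l * (F x) ^ (l - 1)))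
      = fun x => ((f x).toNNReal : ℝ) * φ (F x) := by
    funext x
    rw [hφ, Real.coe_toNNReal _ (hf_nonneg x)]
    ring
  rw [hptw]
  have hmeasnn : Measurable fun x => (f x).toNNReal := hf_meas.real_toNNReal
  have hdens : (volume.withDensity fun x => ENNReal.ofReal (f x))
      = volume.withDensity fun x => ((f x).toNNReal : ENNReal) := rfl
  have h1 : ∫ x, ((f x).toNNReal : ℝ) * φ (F x)
      = ∫ x, φ (F x) ∂(volume.withDensity fun x => ENNReal.ofReal (f x)) := by
    rw [hdens, integral_withDensity_eq_integral_smul hmeasnn]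
    simp [NNReal.smul_def]
  have h2 : ∫ x, φ (F x) ∂(volume.withDensity fun x => ENNReal.ofReal (f x))
      = ∫ u, φ u ∂((volume.withDensity fun x => ENNReal.ofReal (f x)).map F) :=
    (integral_map hFc.measurable.aemeasurable hφmeas.aestronglyMeasurable).symm
  rw [h1, h2, lehmann_map_eq f hf_meas hf_nonneg hf_int hf_one F hF hF_cont]
  exact lehmann_interval_integral l hl
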